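/- arXiv:1008.2701 — 4 statements merged into one kernel-verified Lean document; each statement's English description precedes it below -/
import Mathlib

section
/- Let f : (a,b) → ℝ be n-convex (n ≥ 1) with f_R^{(n)}(a+) finite, and let μ be the nonnegative Borel measure on (a,b) defined by μ([x,y]) = f_R^{(n)}(y) − f_L^{(n)}(x) for a < x ≤ y < b, extended to [a,c] for all c < b. Then f(x) = Σ_{k=0}^{n} f_R^{(k)}(a+) (x−a)^k / k! + (1/n!) ∫_a^b (x−t)₊^n dμ(t) for all x ∈ (a,b). -/
/-!
Write `D k` for the `k`-th derivative of `f`, with `D n` the right derivative `fnR`. Since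
`μ (a, x] = fnR x - fnR(a+)`, Tonelli shows that `R m x = (1/m!) ∫_{(a,x]} (x - t)^m dμ(t)`
satisfies `R 0 x = fnR x - fnR(a+)` and `R (m+1) x = ∫_a^x R m` (Cauchy's formula for repeated
integration).
Integrating `D (n-m)` from `a` by the fundamental theorem of calculus, with the right limits at `a`
as constants of integration, gives by downward induction
`D (n-m) x = ∑_{k ≤ m} D (n-m+k)(a+) (x-a)^k/k! + R m x`; the case `m = n` is the claim.
-/

open Set Filter MeasureTheory

open scoped ENNReal Nat Topology

theorem eq_add_integral_of_hasDerivWithinAt_Ioi_of_tendsto {f g : ℝ → ℝ} {a x L : ℝ}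
    (hax : a < x) (hcont : ContinuousOn f (Ioc a x))
    (hderiv : ∀ s ∈ Ioo a x, HasDerivWithinAt f (g s) (Ioi s) s)
    (hg : IntervalIntegrable g volume a x) (hf : Tendsto f (𝓝[>] a) (𝓝 L)) :
    f x = L + ∫ s in a..x, g s := by
  classical
  set ψ := Function.update f a L
  have hψ : ContinuousOn ψ (Icc a x) := by
    rw [continuousOn_update_iff, Icc_sdiff_left]
    exact ⟨hcont, fun _ => hf.mono_left (nhdsWithin_mono _ Ioc_subset_Ioi_self)⟩
  have hderivψ (s : ℝ) (hs : s ∈ Ioo a x) : HasDerivWithinAt ψ (g s) (Ioi s) s :=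
    (hderiv s hs).congr (fun y hy => Function.update_of_ne (hs.1.trans hy).ne' _ _)
      (Function.update_of_ne hs.1.ne' _ _)
  rw [intervalIntegral.integral_eq_sub_of_hasDeriv_right_of_le hax.le hψ hderivψ hg]
  simp [ψ, hax.ne']

theorem integral_sub_pow_div_factorial (a x : ℝ) (m : ℕ) :
    ∫ s in a..x, (s - a) ^ m / m ! = (x - a) ^ (m + 1) / (m + 1)! := by
  rw [intervalIntegral.integral_div, intervalIntegral.integral_comp_sub_right (· ^ m),
    integral_pow, Nat.factorial_succ]
  push_cast
  field_simp
  ring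

theorem add_integral_sum_pow_div_factorial (d : ℕ → ℝ) (a x : ℝ) (m : ℕ) :
    d 0 + ∫ s in a..x, ∑ k ∈ Finset.range (m + 1), d (k + 1) * (s - a) ^ k / k ! =
      ∑ k ∈ Finset.range (m + 2), d k * (x - a) ^ k / k ! := by
  simp_rw [mul_div_assoc]
  rw [intervalIntegral.integral_finsetSum
      fun k _ => (by fun_prop : Continuous _).intervalIntegrable _ _,
    Finset.sum_range_succ' _ (m + 1)]
  simp only [intervalIntegral.integral_const_mul, integral_sub_pow_div_factorial]
  simp [add_comm]

theorem lintegral_Ioc_sub_pow_div_factorial {t x : ℝ} (htx : t ≤ x) (m : ℕ) :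
    ∫⁻ s in Ioc t x, ENNReal.ofReal ((s - t) ^ m / m !) =
      ENNReal.ofReal ((x - t) ^ (m + 1) / (m + 1)!) := by
  rw [← integral_sub_pow_div_factorial, intervalIntegral.integral_of_le htx,
    ofReal_integral_eq_lintegral_ofReal]
  · exact (by fun_prop : Continuous fun s => (s - t) ^ m / m !).integrableOn_Ioc
  · filter_upwards [ae_restrict_mem measurableSet_Ioc] with s hs
    have : 0 ≤ s - t := by linarith [hs.1]
    positivity

noncomputable def truncPowIntegral (μ : Measure ℝ) (a : ℝ) (m : ℕ) (x : ℝ) : ℝ≥0∞ :=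
  ∫⁻ t in Ioc a x, ENNReal.ofReal ((x - t) ^ m / m !) ∂μ

namespace truncPowIntegral

variable (μ : Measure ℝ) (a : ℝ) (m : ℕ)

theorem zero (x : ℝ) : truncPowIntegral μ a 0 x = μ (Ioc a x) := by
  simp [truncPowIntegral]

theorem monotone : Monotone (truncPowIntegral μ a m) := by
  intro x y hxy
  calc truncPowIntegral μ a m x
      ≤ ∫⁻ t in Ioc a x, ENNReal.ofReal ((y - t) ^ m / m !) ∂μ := by
        refine setLIntegral_mono' measurableSet_Ioc fun t ht => ?_
        gcongr
        linarith [ht.2]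
    _ ≤ truncPowIntegral μ a m y := lintegral_mono_set (Ioc_subset_Ioc_right hxy)

theorem ne_top {x : ℝ} (hx : μ (Ioc a x) ≠ ∞) : truncPowIntegral μ a m x ≠ ∞ := by
  refine ne_top_of_le_ne_top
    (ENNReal.mul_ne_top (ENNReal.ofReal_ne_top (r := (x - a) ^ m / m !)) hx) ?_
  calc truncPowIntegral μ a m x
      ≤ ∫⁻ _ in Ioc a x, ENNReal.ofReal ((x - a) ^ m / m !) ∂μ := by
        refine setLIntegral_mono' measurableSet_Ioc fun t ht => ?_
        gcongr
        · linarith [ht.2]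
        · exact ht.1.le
    _ = _ := setLIntegral_const _ _

/-- Tonelli, applied to `(x - t)^(m+1)/(m+1)! = ∫_t^x (s - t)^m/m! ds`. -/
theorem succ {x : ℝ} (hx : μ (Ioc a x) ≠ ∞) :
    truncPowIntegral μ a (m + 1) x = ∫⁻ s in Ioc a x, truncPowIntegral μ a m s := by
  have : IsFiniteMeasure (μ.restrict (Ioc a x)) := isFiniteMeasure_restrict.2 hx
  set K : ℝ → ℝ → ℝ≥0∞ := fun t s => if t ≤ s then ENNReal.ofReal ((s - t) ^ m / m !) else 0
  have hK : Measurable (Function.uncurry K) :=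
    Measurable.ite (measurableSet_le measurable_fst measurable_snd) (by fun_prop) measurable_const
  have houter (t : ℝ) (ht : t ∈ Ioc a x) :
      ENNReal.ofReal ((x - t) ^ (m + 1) / (m + 1)!) = ∫⁻ s in Ioc a x, K t s := by
    have hKt : K t = (Ici t).indicator fun s => ENNReal.ofReal ((s - t) ^ m / m !) := by
      ext s; simp [K, indicator_apply]
    have hset : Ioc a x ∩ Ici t = Icc t x := by
      ext s; simp only [mem_inter_iff, mem_Ioc, mem_Ici, mem_Icc]
      constructor
      · rintro ⟨⟨-, hsx⟩, hts⟩; exact ⟨hts, hsx⟩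
      · rintro ⟨hts, hsx⟩; exact ⟨⟨ht.1.trans_le hts, hsx⟩, hts⟩
    rw [hKt, lintegral_indicator measurableSet_Ici, Measure.restrict_restrict measurableSet_Ici,
      inter_comm, hset, ← setLIntegral_congr Ioc_ae_eq_Icc,
      lintegral_Ioc_sub_pow_div_factorial ht.2]
  have hinner (s : ℝ) (hs : s ∈ Ioc a x) :
      ∫⁻ t in Ioc a x, K t s ∂μ = truncPowIntegral μ a m s := by
    have hKs : (K · s) = (Iic s).indicator fun t => ENNReal.ofReal ((s - t) ^ m / m !) := by
      ext t; simp [K, indicator_apply]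
    have hset : Iic s ∩ Ioc a x = Ioc a s := by
      ext t; simp only [mem_inter_iff, mem_Ioc, mem_Iic]
      constructor
      · rintro ⟨hts, hat, -⟩; exact ⟨hat, hts⟩
      · rintro ⟨hat, hts⟩; exact ⟨hts, hat, hts.trans hs.2⟩
    rw [hKs, lintegral_indicator measurableSet_Iic,
      Measure.restrict_restrict measurableSet_Iic, hset, truncPowIntegral]
  calc truncPowIntegral μ a (m + 1) x
      = ∫⁻ t in Ioc a x, (∫⁻ s in Ioc a x, K t s) ∂μ :=
        setLIntegral_congr_fun measurableSet_Ioc houter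
    _ = ∫⁻ s in Ioc a x, ∫⁻ t in Ioc a x, K t s ∂μ :=
        lintegral_lintegral_swap (μ := μ.restrict (Ioc a x)) (ν := volume.restrict (Ioc a x))
          hK.aemeasurable
    _ = _ := setLIntegral_congr_fun measurableSet_Ioc hinner

theorem intervalIntegrable_toReal {x : ℝ} (hax : a ≤ x) (hx : μ (Ioc a x) ≠ ∞) :
    IntervalIntegrable (fun s => (truncPowIntegral μ a m s).toReal) volume a x := by
  refine (intervalIntegrable_iff_integrableOn_Ioc_of_le hax).2
    (integrable_toReal_of_lintegral_ne_top (monotone μ a m).measurable.aemeasurable ?_)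
  rw [← succ μ a m hx]
  exact ne_top μ a (m + 1) hx

theorem integral_toReal {x : ℝ} (hax : a ≤ x) (hx : μ (Ioc a x) ≠ ∞) :
    ∫ s in a..x, (truncPowIntegral μ a m s).toReal = (truncPowIntegral μ a (m + 1) x).toReal := by
  rw [intervalIntegral.integral_of_le hax, MeasureTheory.integral_toReal
    (monotone μ a m).measurable.aemeasurable, succ μ a m hx]
  filter_upwards [ae_restrict_mem measurableSet_Ioc] with s hs
  exact ((monotone μ a m hs.2).trans_lt (ne_top μ a m hx).lt_top)

end truncPowIntegral

theorem eq_sum_pow_div_factorial_add_truncPowIntegral {n : ℕ} {a b : ℝ} {D : ℕ → ℝ → ℝ}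
    {c : ℕ → ℝ} {μ : Measure ℝ} (hcont : ∀ k < n, ContinuousOn (D k) (Ioo a b))
    (hderiv : ∀ k < n, ∀ x ∈ Ioo a b, HasDerivWithinAt (D k) (D (k + 1) x) (Ioi x) x)
    (hlim : ∀ k < n, Tendsto (D k) (𝓝[>] a) (𝓝 (c k)))
    (hfin : ∀ x ∈ Ioo a b, μ (Ioc a x) ≠ ∞)
    (hbase : ∀ x ∈ Ioo a b, D n x = c n + (μ (Ioc a x)).toReal) :
    ∀ m ≤ n, ∀ x ∈ Ioo a b, D (n - m) x =
      ∑ k ∈ Finset.range (m + 1), c (n - m + k) * (x - a) ^ k / k ! +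
        (truncPowIntegral μ a m x).toReal := by
  intro m
  induction m with
  | zero => simpa [truncPowIntegral.zero] using hbase
  | succ m ih =>
    intro hm x hx
    have hk : n - (m + 1) < n := by omega
    set T : ℝ → ℝ := fun s =>
      ∑ k ∈ Finset.range (m + 1), c (n - m + k) * (s - a) ^ k / (k !)
    set R : ℝ → ℝ := fun s => (truncPowIntegral μ a m s).toReal
    have hderivTR (s : ℝ) (hs : s ∈ Ioo a x) :
        HasDerivWithinAt (D (n - (m + 1))) (T s + R s) (Ioi s) s := by
      have hsb : s ∈ Ioo a b := ⟨hs.1, hs.2.trans hx.2⟩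
      rw [← ih (by omega) s hsb, show n - m = n - (m + 1) + 1 by omega]
      exact hderiv _ hk s hsb
    have hTR : IntervalIntegrable (fun s => T s + R s) volume a x :=
      ((by fun_prop : Continuous T).intervalIntegrable _ _).add
        (truncPowIntegral.intervalIntegrable_toReal μ a m hx.1.le (hfin x hx))
    have htaylor := add_integral_sum_pow_div_factorial (fun j => c (n - (m + 1) + j)) a x m
    simp only [show ∀ k, n - (m + 1) + (k + 1) = n - m + k by omega, add_zero] at htaylor
    rw [eq_add_integral_of_hasDerivWithinAt_Ioi_of_tendsto hx.1
        ((hcont _ hk).mono (Ioc_subset_Ioo_right hx.2)) hderivTR hTR (hlim _ hk),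
      intervalIntegral.integral_add ((by fun_prop : Continuous T).intervalIntegrable _ _)
        (truncPowIntegral.intervalIntegrable_toReal μ a m hx.1.le (hfin x hx)),
      truncPowIntegral.integral_toReal μ a m hx.1.le (hfin x hx), ← add_assoc, htaylor]

theorem setIntegral_Ioo_max_sub_pow_div_factorial (μ : Measure ℝ) {n : ℕ} (hn : n ≠ 0)
    {a b x : ℝ} (hxb : x < b) :
    ∫ t in Ioo a b, max (x - t) 0 ^ n / n ! ∂μ = (truncPowIntegral μ a n x).toReal := by
  have hind : (fun t => ENNReal.ofReal (max (x - t) 0 ^ n / n !)) =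
      (Iic x).indicator fun t => ENNReal.ofReal ((x - t) ^ n / n !) := by
    ext t
    rcases le_or_gt t x with htx | hxt
    · simp [htx]
    · simp [not_le.2 hxt, max_eq_right (sub_nonpos.2 hxt.le), hn]
  have hset : Iic x ∩ Ioo a b = Ioc a x := by
    ext t; simp only [mem_inter_iff, mem_Iic, mem_Ioo, mem_Ioc]
    constructor
    · rintro ⟨htx, hat, -⟩; exact ⟨hat, htx⟩
    · rintro ⟨hat, htx⟩; exact ⟨htx, hat, htx.trans_lt hxb⟩
  rw [integral_eq_lintegral_of_nonneg_ae (Eventually.of_forall fun t => by positivity)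
    (by fun_prop), hind, lintegral_indicator measurableSet_Iic,
    Measure.restrict_restrict measurableSet_Iic, hset, truncPowIntegral]

theorem nconvex_integral_representation_general (n : ℕ) (hn : 1 ≤ n) (a b : ℝ)
    (f : ℝ → ℝ) (F : ℕ → ℝ → ℝ) (fnL fnR : ℝ → ℝ) (c : ℕ → ℝ)
    (μ : Measure ℝ)
    (hF0 : F 0 = f)
    (hchain : ∀ k, k + 1 ≤ n - 1 → ∀ x ∈ Set.Ioo a b, HasDerivAt (F k) (F (k + 1) x) x)
    (hL : ∀ x ∈ Set.Ioo a b, HasDerivWithinAt (F (n - 1)) (fnL x) (Set.Iic x) x)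
    (hR : ∀ x ∈ Set.Ioo a b, HasDerivWithinAt (F (n - 1)) (fnR x) (Set.Ici x) x)
    (hmono : MonotoneOn fnR (Set.Ioo a b))
    (hlim : ∀ k < n, Filter.Tendsto (F k) (nhdsWithin a (Set.Ioi a)) (nhds (c k)))
    (hlimn : Filter.Tendsto fnR (nhdsWithin a (Set.Ioi a)) (nhds (c n)))
    (hext : ∀ y ∈ Set.Ioo a b, μ (Set.Ioc a y) = ENNReal.ofReal (fnR y - c n)) :
    ∀ x ∈ Set.Ioo a b,
      f x = ∑ k ∈ Finset.range (n + 1), c k * (x - a) ^ k / (Nat.factorial k) +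
        (1 / (Nat.factorial n : ℝ)) * ∫ t in Set.Ioo a b, max (x - t) 0 ^ n ∂μ := by
  classical
  set D := Function.update F n fnR
  have hDk (k : ℕ) (hk : k < n) : D k = F k := Function.update_of_ne hk.ne _ _
  have hD (k : ℕ) (hk : k < n) (x : ℝ) (hx : x ∈ Ioo a b) :
      ContinuousAt (D k) x ∧ HasDerivWithinAt (D k) (D (k + 1) x) (Ioi x) x := by
    rw [hDk k hk]
    rcases (Nat.succ_le_of_lt hk).lt_or_eq with hk' | rfl
    · rw [hDk _ hk']
      have hFk := hchain k (by omega) x hx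
      exact ⟨hFk.continuousAt, hFk.hasDerivWithinAt⟩
    · simp only [D, Function.update_self] at hR hL ⊢
      exact ⟨continuousAt_iff_continuous_left_right.2
        ⟨(hL x hx).continuousWithinAt, (hR x hx).continuousWithinAt⟩,
        (hR x hx).mono Ioi_subset_Ici_self⟩
  -- `ENNReal.ofReal` in `hext` clips at `0`, so this is needed to read off `fnR` from `μ`
  have hcn (x : ℝ) (hx : x ∈ Ioo a b) : c n ≤ fnR x := by
    refine le_of_tendsto hlimn ?_
    filter_upwards [Ioo_mem_nhdsGT hx.1] with s hs
    exact hmono ⟨hs.1, hs.2.trans hx.2⟩ hx hs.2.le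
  have hrepr := eq_sum_pow_div_factorial_add_truncPowIntegral (D := D) (μ := μ)
    (fun k hk => continuousOn_of_forall_continuousAt fun x hx => (hD k hk x hx).1)
    (fun k hk x hx => (hD k hk x hx).2) (fun k hk => hDk k hk ▸ hlim k hk)
    (fun x hx => hext x hx ▸ ENNReal.ofReal_ne_top)
    (fun x hx => by simp [D, hext x hx, hcn x hx]) n le_rfl
  intro x hx
  rw [one_div_mul_eq_div, ← integral_div,
    setIntegral_Ioo_max_sub_pow_div_factorial μ (by omega) hx.2, ← hF0, ← hDk 0 hn]
  simpa using hrepr x hx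

/-- Integral representation of an `n`-convex function `f` on `(a,b)` whose right `n`-th
derivative has a finite limit at `a+`: here `F` is the chain of ordinary derivatives of
`f` up to order `n-1`, `fnR` and `fnL` are the right and left `n`-th derivatives, `μ` is
the nonnegative Borel measure with `μ([x,y]) = fnR y - fnL x`, extended to `(a,y]`, and
`c k` is the right limit of the `k`-th derivative at `a`. Then
`f(x) = ∑_{k=0}^n c k (x-a)^k/k! + (1/n!) ∫_a^b (x-t)₊ⁿ dμ(t)` on `(a,b)`. -/
theorem nconvex_integral_representation (n : ℕ) (hn : 1 ≤ n) (a b : ℝ) (hab : a < b)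
    (f : ℝ → ℝ) (F : ℕ → ℝ → ℝ) (fnL fnR : ℝ → ℝ) (c : ℕ → ℝ)
    (μ : Measure ℝ)
    (hF0 : F 0 = f)
    (hchain : ∀ k, k + 1 ≤ n - 1 → ∀ x ∈ Set.Ioo a b, HasDerivAt (F k) (F (k + 1) x) x)
    (hL : ∀ x ∈ Set.Ioo a b, HasDerivWithinAt (F (n - 1)) (fnL x) (Set.Iic x) x)
    (hR : ∀ x ∈ Set.Ioo a b, HasDerivWithinAt (F (n - 1)) (fnR x) (Set.Ici x) x)
    (hmono : MonotoneOn fnR (Set.Ioo a b))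
    (hμ : ∀ x y, a < x → x ≤ y → y < b →
      μ (Set.Icc x y) = ENNReal.ofReal (fnR y - fnL x))
    (hlim : ∀ k < n, Filter.Tendsto (F k) (nhdsWithin a (Set.Ioi a)) (nhds (c k)))
    (hlimn : Filter.Tendsto fnR (nhdsWithin a (Set.Ioi a)) (nhds (c n)))
    (hext : ∀ y ∈ Set.Ioo a b, μ (Set.Ioc a y) = ENNReal.ofReal (fnR y - c n)) :
    ∀ x ∈ Set.Ioo a b,
      f x = ∑ k ∈ Finset.range (n + 1), c k * (x - a) ^ k / (Nat.factorial k) +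
        (1 / (Nat.factorial n : ℝ)) * ∫ t in Set.Ioo a b, max (x - t) 0 ^ n ∂μ :=
  nconvex_integral_representation_general n hn a b f F fnL fnR c μ hF0 hchain hL hR hmono hlim hlimn
    hext
end

section
/- Suppose f : (a,b) → ℝ has the form f(x) = ∫_{(a,ξ]} (−1)^{n+1}[−(x−u)]₊^n/n! dg₋(u) + ∫_{[ξ,b)} (x−u)₊^n/n! dg₊(u) + Q(x), where ξ ∈ (a,b), g₋ ≤ 0 is non-decreasing right-continuous on (a,b), g₊ ≥ 0 is non-decreasing left-continuous on (a,b), g₋(ξ) = g₊(ξ) = 0, and Q is a polynomial of degree at most n−1. Then f is n-convex on (a,b). -/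
open Set Filter MeasureTheory

/-- Divided difference of `f` at the points `x 0, ..., x (m-1)`. -/
noncomputable def divDiff (f : ℝ → ℝ) {m : ℕ} (x : Fin m → ℝ) : ℝ :=
  ∑ i, f (x i) / ∏ j ∈ Finset.univ.erase i, (x i - x j)

/-- `f` is `n`-convex on `(a,b)` in the sense of Popoviciu: all its `(n+2)`-point
divided differences at increasing points of `(a,b)` are nonnegative. -/
def PopoviciuConvexOn (n : ℕ) (a b : ℝ) (f : ℝ → ℝ) : Prop :=
  ∀ x : Fin (n + 2) → ℝ, StrictMono x → (∀ i, x i ∈ Set.Ioo a b) → 0 ≤ divDiff f x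

/-- `F` is a chain of successive right derivatives of length `n` on `(a,b)`. -/
def IsRightDerivChainOn (F : ℕ → ℝ → ℝ) (n : ℕ) (a b : ℝ) : Prop :=
  ∀ k < n, ∀ x ∈ Set.Ioo a b, HasDerivWithinAt (F k) (F (k + 1) x) (Set.Ici x) x

/-- `f` is `n`-convex on `(a,b)`: its right `n`-th derivative (obtained by `n`
successive right derivatives) exists at every point of `(a,b)` and is non-decreasing. -/
def NConvexOn (n : ℕ) (a b : ℝ) (f : ℝ → ℝ) : Prop :=
  ∃ F : ℕ → ℝ → ℝ, F 0 = f ∧ IsRightDerivChainOn F n a b ∧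
    MonotoneOn (F n) (Set.Ioo a b)

open Topology
open scoped Nat ENNReal

/-!
Write `ψₘ(s) = s₊ᵐ/m!` (`truncPow`) and `φₘ(s) = ψₘ(s) - sᵐ/m!` (`negTruncPow`), so that on
`(a, b)` the representation reads
`f(x) = ∫ φₙ(x - u) dμ₋(u) + ∫ ψₙ(x - u) dμ₊(u) + Q(x)`. Both kernel families satisfy
`∂₊ K_{m+1} = K_m` for the right derivative. Near a point `x` only a piece of finite measure of
each integral matters: `(x, ξ]` on the left, because `φₘ(t - u) = 0` for `u ≤ x ≤ t`, and `[ξ, z)`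
with `x < z < b` on the right. Dominated convergence applied to difference quotients then shows
that the `k`-th right derivative of `f` is
`∫ φₙ₋ₖ(x - u) dμ₋(u) + ∫ ψₙ₋ₖ(x - u) dμ₊(u) + Q⁽ᵏ⁾(x)`. For `k = n` this is
`-μ₋((x, ξ]) + μ₊([ξ, x])`, which is non-decreasing in `x`.
-/

theorem hasDerivWithinAt_Ici_integral_of_dominated_of_deriv_le {α E : Type*}
    [MeasurableSpace α] {μ : Measure α} [NormedAddCommGroup E] [NormedSpace ℝ E]
    {F F' : ℝ → α → E} {bound : α → ℝ} {x y : ℝ} (hxy : x < y)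
    (hF_int : ∀ t ∈ Icc x y, Integrable (F t) μ)
    (hF_cont : ∀ᵐ u ∂μ, ContinuousOn (F · u) (Icc x y))
    (hF_deriv : ∀ᵐ u ∂μ, ∀ t ∈ Ico x y, HasDerivWithinAt (F · u) (F' t u) (Ici t) t)
    (h_bound : ∀ᵐ u ∂μ, ∀ t ∈ Ico x y, ‖F' t u‖ ≤ bound u)
    (bound_integrable : Integrable bound μ) :
    HasDerivWithinAt (fun t => ∫ u, F t u ∂μ) (∫ u, F' x u ∂μ) (Ici x) x := by
  have hslope_iff {g : ℝ → E} {g' : E} :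
      HasDerivWithinAt g g' (Ici x) x ↔ Tendsto (slope g x) (𝓝[>] x) (𝓝 g') := by
    rw [← hasDerivWithinAt_Ioi_iff_Ici,
      hasDerivWithinAt_iff_tendsto_slope' (s := Ioi x) (lt_irrefl x)]
  have hIoc : Ioc x y ∈ 𝓝[>] x := Ioc_mem_nhdsGT hxy
  have hFx : Integrable (F x) μ := hF_int x (left_mem_Icc.2 hxy.le)
  have hslope : ∀ t ∈ Ioc x y,
      ∫ u, slope (F · u) x t ∂μ = slope (fun t => ∫ u, F t u ∂μ) x t := fun t ht => by
    simp only [slope_def_module]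
    rw [integral_smul, integral_sub (hF_int t (Ioc_subset_Icc_self ht)) hFx]
  rw [hslope_iff]
  refine Tendsto.congr' (eventuallyEq_of_mem hIoc hslope) ?_
  refine tendsto_integral_filter_of_dominated_convergence bound ?_ ?_ bound_integrable ?_
  · filter_upwards [hIoc] with t ht
    exact (((hF_int t (Ioc_subset_Icc_self ht)).sub hFx).smul (t - x)⁻¹).aestronglyMeasurable
  · filter_upwards [hIoc] with t ht
    filter_upwards [hF_cont, hF_deriv, h_bound] with u hcont hderiv hbound
    have hmv := norm_image_sub_le_of_norm_deriv_right_le_segment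
      (hcont.mono (Icc_subset_Icc_right ht.2))
      (fun s hs => hderiv s ⟨hs.1, hs.2.trans_le ht.2⟩)
      (fun s hs => hbound s ⟨hs.1, hs.2.trans_le ht.2⟩) t (right_mem_Icc.2 ht.1.le)
    have htx : 0 < t - x := sub_pos.2 ht.1
    rwa [slope_def_module, norm_smul, norm_inv, Real.norm_of_nonneg htx.le,
      inv_mul_le_iff₀ htx, mul_comm]
  · filter_upwards [hF_deriv] with u hderiv
    exact hslope_iff.1 (hderiv x (left_mem_Ico.2 hxy))

noncomputable def truncPow (m : ℕ) (s : ℝ) : ℝ := if 0 ≤ s then s ^ m / m ! else 0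

/-- `(-1)ᵐ⁺¹ (-s)₊ᵐ / m!`, which vanishes at `s = 0` even for `m = 0`. Written as a difference
so that it inherits the derivative relation of `truncPow`. -/
noncomputable def negTruncPow (m : ℕ) (s : ℝ) : ℝ := truncPow m s - s ^ m / m !

theorem hasDerivAt_pow_succ_div_factorial (m : ℕ) (s : ℝ) :
    HasDerivAt (fun t : ℝ => t ^ (m + 1) / (m + 1)!) (s ^ m / m !) s := by
  refine ((hasDerivAt_pow (m + 1) s).div_const _).congr_deriv ?_
  rw [Nat.factorial_succ]
  push_cast
  field_simp

namespace truncPow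

variable {m : ℕ} {s : ℝ}

theorem of_neg (hs : s < 0) : truncPow m s = 0 := if_neg hs.not_ge

theorem eq_max_pow (hm : m ≠ 0) (s : ℝ) : truncPow m s = max s 0 ^ m / m ! := by
  rcases le_or_gt 0 s with hs | hs
  · rw [truncPow, if_pos hs, max_eq_left hs]
  · rw [of_neg hs, max_eq_right hs.le, zero_pow hm, zero_div]

theorem abs_le_abs_pow (m : ℕ) (s : ℝ) : |truncPow m s| ≤ |s| ^ m := by
  unfold truncPow
  split_ifs
  · rw [abs_div, abs_pow, Nat.abs_cast]
    exact div_le_self (by positivity) (by exact_mod_cast m.factorial_pos)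
  · rw [abs_zero]
    positivity

theorem measurable (m : ℕ) : Measurable (truncPow m) :=
  Measurable.ite measurableSet_Ici (by fun_prop) measurable_const

theorem continuous_succ (m : ℕ) : Continuous (truncPow (m + 1)) := by
  rw [funext (eq_max_pow m.succ_ne_zero)]
  fun_prop

theorem monotone_zero : Monotone (truncPow 0) := by
  intro s t hst
  simp only [truncPow, pow_zero, Nat.factorial_zero, Nat.cast_one, div_one]
  split_ifs <;> linarith

theorem hasDerivWithinAt_succ (m : ℕ) (s : ℝ) :
    HasDerivWithinAt (truncPow (m + 1)) (truncPow m s) (Ici s) s := by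
  rcases le_or_gt 0 s with hs | hs
  · rw [truncPow, if_pos hs]
    exact (hasDerivAt_pow_succ_div_factorial m s).hasDerivWithinAt.congr_of_mem
      (fun t ht => if_pos (hs.trans ht)) self_mem_Ici
  · rw [of_neg hs]
    refine (hasDerivWithinAt_const s _ 0).congr_of_eventuallyEq ?_ (of_neg hs)
    filter_upwards [nhdsWithin_le_nhds (Iio_mem_nhds hs)] with t ht using of_neg ht

end truncPow

namespace negTruncPow

variable {m : ℕ} {s : ℝ}

theorem of_nonneg (hs : 0 ≤ s) : negTruncPow m s = 0 := by
  rw [negTruncPow, truncPow, if_pos hs, sub_self]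

theorem eq_neg_one_pow_mul (hm : m ≠ 0) (s : ℝ) :
    negTruncPow m s = (-1) ^ (m + 1) * max (-s) 0 ^ m / m ! := by
  rcases le_or_gt 0 s with hs | hs
  · rw [of_nonneg hs, max_eq_right (neg_nonpos.2 hs), zero_pow hm, mul_zero, zero_div]
  · rw [negTruncPow, truncPow.of_neg hs, max_eq_left (neg_nonneg.2 hs.le), pow_succ,
      mul_right_comm, ← mul_pow]
    simp [neg_div]

theorem abs_le_abs_pow (m : ℕ) (s : ℝ) : |negTruncPow m s| ≤ |s| ^ m := by
  rcases le_or_gt 0 s with hs | hs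
  · rw [of_nonneg hs, abs_zero]
    positivity
  · rw [negTruncPow, truncPow.of_neg hs, zero_sub, abs_neg, abs_div, abs_pow, Nat.abs_cast]
    exact div_le_self (by positivity) (by exact_mod_cast m.factorial_pos)

theorem measurable (m : ℕ) : Measurable (negTruncPow m) :=
  (truncPow.measurable m).sub (by fun_prop)

theorem continuous_succ (m : ℕ) : Continuous (negTruncPow (m + 1)) :=
  (truncPow.continuous_succ m).sub (by fun_prop)

theorem monotone_zero : Monotone (negTruncPow 0) := by
  intro s t hst
  simpa [negTruncPow] using truncPow.monotone_zero hst

theorem hasDerivWithinAt_succ (m : ℕ) (s : ℝ) :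
    HasDerivWithinAt (negTruncPow (m + 1)) (negTruncPow m s) (Ici s) s :=
  (truncPow.hasDerivWithinAt_succ m s).sub
    (hasDerivAt_pow_succ_div_factorial m s).hasDerivWithinAt

end negTruncPow

section ConvolutionKernel

variable {ν : Measure ℝ} [IsFiniteMeasure ν] {p q : ℝ} {k k' : ℝ → ℝ} {m : ℕ}

theorem abs_sub_le_of_mem_Icc {t u : ℝ} (hu : u ∈ Icc p q) : |t - u| ≤ |t| + max |p| |q| :=
  (abs_sub t u).trans (add_le_add_right (abs_le_max_abs_abs hu.1 hu.2) _)

theorem integrable_comp_sub_of_abs_le_pow (hν : ∀ᵐ u ∂ν, u ∈ Icc p q) (hk : Measurable k)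
    (hk_le : ∀ s, |k s| ≤ |s| ^ m) (t : ℝ) : Integrable (fun u => k (t - u)) ν := by
  refine .of_bound (hk.comp (measurable_const.sub measurable_id)).aestronglyMeasurable
    ((|t| + max |p| |q|) ^ m) ?_
  filter_upwards [hν] with u hu
  rw [Real.norm_eq_abs]
  exact (hk_le _).trans (pow_le_pow_left₀ (abs_nonneg _) (abs_sub_le_of_mem_Icc hu) m)

theorem hasDerivWithinAt_integral_comp_sub (hν : ∀ᵐ u ∂ν, u ∈ Icc p q) (hk : Continuous k)
    (hk_le : ∀ s, |k s| ≤ |s| ^ (m + 1)) (hk'_le : ∀ s, |k' s| ≤ |s| ^ m)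
    (hderiv : ∀ s, HasDerivWithinAt k (k' s) (Ici s) s) (x : ℝ) :
    HasDerivWithinAt (fun t => ∫ u, k (t - u) ∂ν) (∫ u, k' (x - u) ∂ν) (Ici x) x := by
  refine hasDerivWithinAt_Ici_integral_of_dominated_of_deriv_le (lt_add_one x)
    (F' := fun t u => k' (t - u)) (bound := fun _ => (|x| + 1 + max |p| |q|) ^ m)
    (fun t _ => integrable_comp_sub_of_abs_le_pow hν hk.measurable hk_le t)
    (ae_of_all _ fun _ => (hk.comp (continuous_id.sub continuous_const)).continuousOn)
    (ae_of_all _ fun u t _ => ?_) ?_ (integrable_const _)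
  · exact ((hderiv (t - u)).comp t ((hasDerivAt_id t).sub_const u).hasDerivWithinAt
      fun s hs => sub_le_sub_right hs u).congr_deriv (mul_one _)
  · filter_upwards [hν] with u hu t ht
    have ht' : |t| ≤ |x| + 1 :=
      abs_le.2 ⟨by linarith [neg_abs_le x, ht.1], by linarith [le_abs_self x, ht.2]⟩
    rw [Real.norm_eq_abs]
    exact (hk'_le _).trans (pow_le_pow_left₀ (abs_nonneg _)
      ((abs_sub_le_of_mem_Icc hu).trans (add_le_add_left ht' _)) m)

end ConvolutionKernel

theorem ae_restrict_Ioc_mem_Icc (μ : Measure ℝ) (x ξ : ℝ) :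
    ∀ᵐ u ∂μ.restrict (Ioc x ξ), u ∈ Icc x ξ :=
  ae_restrict_of_forall_mem measurableSet_Ioc fun _ => mem_Icc_of_Ioc

theorem ae_restrict_Ico_mem_Icc (μ : Measure ℝ) (ξ z : ℝ) :
    ∀ᵐ u ∂μ.restrict (Ico ξ z), u ∈ Icc ξ z :=
  ae_restrict_of_forall_mem measurableSet_Ico fun _ => mem_Icc_of_Ico

section TruncPowIntegral

variable {μ : Measure ℝ} {a b ξ : ℝ}

theorem setIntegral_Ioc_negTruncPow_eq (m : ℕ) {x t : ℝ} (hax : a ≤ x) (hxt : x ≤ t) :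
    ∫ u in Ioc a ξ, negTruncPow m (t - u) ∂μ = ∫ u in Ioc x ξ, negTruncPow m (t - u) ∂μ :=
  setIntegral_eq_of_subset_of_forall_sdiff_eq_zero measurableSet_Ioc (Ioc_subset_Ioc_left hax)
    fun _ hu => negTruncPow.of_nonneg <| sub_nonneg.2 <|
      (not_lt.1 fun hxu => hu.2 ⟨hxu, hu.1.2⟩).trans hxt

theorem setIntegral_Ico_truncPow_eq (m : ℕ) {z t : ℝ} (hzb : z ≤ b) (htz : t < z) :
    ∫ u in Ico ξ b, truncPow m (t - u) ∂μ = ∫ u in Ico ξ z, truncPow m (t - u) ∂μ :=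
  setIntegral_eq_of_subset_of_forall_sdiff_eq_zero measurableSet_Ico (Ico_subset_Ico_right hzb)
    fun _ hu => truncPow.of_neg <| sub_neg.2 <|
      htz.trans_le (not_lt.1 fun huz => hu.2 ⟨hu.1.1, huz⟩)

theorem hasDerivWithinAt_setIntegral_Ioc_negTruncPow (m : ℕ) {x : ℝ} (hax : a ≤ x)
    (hμ : μ (Ioc x ξ) ≠ ∞) :
    HasDerivWithinAt (fun t => ∫ u in Ioc a ξ, negTruncPow (m + 1) (t - u) ∂μ)
      (∫ u in Ioc a ξ, negTruncPow m (x - u) ∂μ) (Ici x) x := by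
  have := isFiniteMeasure_restrict.2 hμ
  rw [setIntegral_Ioc_negTruncPow_eq m hax le_rfl]
  have hderiv := hasDerivWithinAt_integral_comp_sub (ae_restrict_Ioc_mem_Icc μ x ξ)
    (negTruncPow.continuous_succ m) (negTruncPow.abs_le_abs_pow _)
    (negTruncPow.abs_le_abs_pow m) (negTruncPow.hasDerivWithinAt_succ m) x
  exact hderiv.congr_of_mem (fun t ht => setIntegral_Ioc_negTruncPow_eq _ hax ht) self_mem_Ici

theorem hasDerivWithinAt_setIntegral_Ico_truncPow (m : ℕ) {x z : ℝ} (hxz : x < z) (hzb : z ≤ b)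
    (hμ : μ (Ico ξ z) ≠ ∞) :
    HasDerivWithinAt (fun t => ∫ u in Ico ξ b, truncPow (m + 1) (t - u) ∂μ)
      (∫ u in Ico ξ b, truncPow m (x - u) ∂μ) (Ici x) x := by
  have := isFiniteMeasure_restrict.2 hμ
  rw [setIntegral_Ico_truncPow_eq m hzb hxz]
  have hderiv := hasDerivWithinAt_integral_comp_sub (ae_restrict_Ico_mem_Icc μ ξ z)
    (truncPow.continuous_succ m) (truncPow.abs_le_abs_pow _)
    (truncPow.abs_le_abs_pow m) (truncPow.hasDerivWithinAt_succ m) x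
  refine hderiv.congr_of_eventuallyEq ?_ (setIntegral_Ico_truncPow_eq _ hzb hxz)
  filter_upwards [nhdsWithin_le_nhds (Iio_mem_nhds hxz)] with t ht
    using setIntegral_Ico_truncPow_eq _ hzb ht

theorem monotoneOn_setIntegral_Ioc_negTruncPow_zero (hμ : ∀ x, a < x → μ (Ioc x ξ) ≠ ∞) :
    MonotoneOn (fun t => ∫ u in Ioc a ξ, negTruncPow 0 (t - u) ∂μ) (Ioi a) := by
  intro s hs t _ hst
  have : IsFiniteMeasure (μ.restrict (Ioc s ξ)) := isFiniteMeasure_restrict.2 (hμ s hs)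
  have hint := integrable_comp_sub_of_abs_le_pow (ae_restrict_Ioc_mem_Icc μ s ξ)
    (negTruncPow.measurable 0) (negTruncPow.abs_le_abs_pow 0)
  dsimp only
  rw [setIntegral_Ioc_negTruncPow_eq 0 hs.le le_rfl, setIntegral_Ioc_negTruncPow_eq 0 hs.le hst]
  exact integral_mono (hint s) (hint t) fun u => negTruncPow.monotone_zero (sub_le_sub_right hst u)

theorem monotoneOn_setIntegral_Ico_truncPow_zero (hμ : ∀ z, z < b → μ (Ico ξ z) ≠ ∞) :
    MonotoneOn (fun t => ∫ u in Ico ξ b, truncPow 0 (t - u) ∂μ) (Iio b) := by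
  intro s _ t ht hst
  obtain ⟨z, htz, hzb⟩ := exists_between (mem_Iio.1 ht)
  have : IsFiniteMeasure (μ.restrict (Ico ξ z)) := isFiniteMeasure_restrict.2 (hμ z hzb)
  have hint := integrable_comp_sub_of_abs_le_pow (ae_restrict_Ico_mem_Icc μ ξ z)
    (truncPow.measurable 0) (truncPow.abs_le_abs_pow 0)
  dsimp only
  rw [setIntegral_Ico_truncPow_eq 0 hzb.le (hst.trans_lt htz),
    setIntegral_Ico_truncPow_eq 0 hzb.le htz]
  exact integral_mono (hint s) (hint t) fun u => truncPow.monotone_zero (sub_le_sub_right hst u)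

end TruncPowIntegral

theorem nConvexOn_of_hasDerivWithinAt {n : ℕ} {a b : ℝ} {f : ℝ → ℝ} {G : ℕ → ℝ → ℝ}
    (hG : ∀ m < n, ∀ x ∈ Ioo a b, HasDerivWithinAt (G (m + 1)) (G m x) (Ici x) x)
    (hG₀ : MonotoneOn (G 0) (Ioo a b)) (hf : EqOn f (G n) (Ioo a b)) : NConvexOn n a b f := by
  let F : ℕ → ℝ → ℝ := fun k => if k = 0 then f else G (n - k)
  have hF : ∀ k, EqOn (F k) (G (n - k)) (Ioo a b) := fun k x hx => by
    by_cases hk : k = 0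
    · simp [F, hk, hf hx]
    · simp [F, hk]
  refine ⟨F, if_pos rfl, fun k hk x hx => ?_, hG₀.congr fun x hx => ?_⟩
  · have h := hG (n - (k + 1)) (by omega) x hx
    rw [show n - (k + 1) + 1 = n - k by omega] at h
    rw [hF (k + 1) hx]
    exact h.congr_of_eventuallyEq
      ((hF k).eventuallyEq_of_mem (mem_nhdsWithin_of_mem_nhds (isOpen_Ioo.mem_nhds hx))) (hF k hx)
  · rw [hF n hx, Nat.sub_self]

theorem integral_representation_nconvex_general (n : ℕ) (hn : 1 ≤ n) (a b ξ : ℝ)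
    (f gm gp : ℝ → ℝ) (μm μp : Measure ℝ) (Q : Polynomial ℝ)
    (hμm : ∀ u v, a < u → u ≤ v → v ≤ ξ →
      μm (Set.Ioc u v) = ENNReal.ofReal (gm v - gm u))
    (hμp : ∀ u v, ξ ≤ u → u ≤ v → v < b →
      μp (Set.Ico u v) = ENNReal.ofReal (gp v - gp u))
    (hQ : Q.natDegree ≤ n - 1)
    (hrep : ∀ x ∈ Set.Ioo a b, f x =
      (∫ u in Set.Ioc a ξ, (-1 : ℝ) ^ (n + 1) * max (u - x) 0 ^ n / (Nat.factorial n) ∂μm) +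
      (∫ u in Set.Ico ξ b, max (x - u) 0 ^ n / (Nat.factorial n) ∂μp) +
      Q.eval x) :
    NConvexOn n a b f := by
  have hμm_fin : ∀ x, a < x → μm (Ioc x ξ) ≠ ∞ := fun x hax => by
    rcases le_or_gt x ξ with hxξ | hξx
    · exact hμm x ξ hax hxξ le_rfl ▸ ENNReal.ofReal_ne_top
    · simp [Ioc_eq_empty hξx.not_gt]
  have hμp_fin : ∀ z, z < b → μp (Ico ξ z) ≠ ∞ := fun z hzb => by
    rcases le_or_gt ξ z with hξz | hzξ
    · exact hμp ξ z le_rfl hξz hzb ▸ ENNReal.ofReal_ne_top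
    · simp [Ico_eq_empty hzξ.not_gt]
  refine nConvexOn_of_hasDerivWithinAt (G := fun m x =>
    (∫ u in Ioc a ξ, negTruncPow m (x - u) ∂μm) + (∫ u in Ico ξ b, truncPow m (x - u) ∂μp) +
      (Polynomial.derivative^[n - m] Q).eval x) (fun m hm x hx => ?_) ?_ fun x hx => ?_
  · obtain ⟨z, hxz, hzb⟩ := exists_between hx.2
    have hQ' : HasDerivAt (fun y => (Polynomial.derivative^[n - (m + 1)] Q).eval y)
        ((Polynomial.derivative^[n - m] Q).eval x) x := by
      rw [show n - m = n - (m + 1) + 1 by omega, Function.iterate_succ_apply']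
      exact Polynomial.hasDerivAt _ x
    exact ((hasDerivWithinAt_setIntegral_Ioc_negTruncPow m hx.1.le (hμm_fin x hx.1)).add
      (hasDerivWithinAt_setIntegral_Ico_truncPow m hxz hzb.le (hμp_fin z hzb))).add
      hQ'.hasDerivWithinAt
  · have hQn : Polynomial.derivative^[n] Q = 0 := Polynomial.iterate_derivative_eq_zero (by omega)
    simp only [Nat.sub_zero, hQn, Polynomial.eval_zero, add_zero]
    exact ((monotoneOn_setIntegral_Ioc_negTruncPow_zero hμm_fin).mono Ioo_subset_Ioi_self).add
      ((monotoneOn_setIntegral_Ico_truncPow_zero hμp_fin).mono Ioo_subset_Iio_self)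
  · simp only [hrep x hx, Nat.sub_self, Function.iterate_zero_apply,
      negTruncPow.eq_neg_one_pow_mul (by omega : n ≠ 0), truncPow.eq_max_pow (by omega : n ≠ 0),
      neg_sub]

/-- If `f` has the integral representation
`f(x) = ∫_{(a,ξ]} (-1)^{n+1}[-(x-u)]₊ⁿ/n! dg₋(u) + ∫_{[ξ,b)} (x-u)₊ⁿ/n! dg₊(u) + Q(x)`,
where `ξ ∈ (a,b)`, `g₋ ≤ 0` is non-decreasing right-continuous, `g₊ ≥ 0` is
non-decreasing left-continuous, `g₋(ξ) = g₊(ξ) = 0` and `Q ∈ Π_{n-1}`, then `f` is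
`n`-convex on `(a,b)`. The measures `μm`, `μp` are the Lebesgue–Stieltjes measures of
`g₋` and `g₊`. -/
theorem integral_representation_nconvex (n : ℕ) (hn : 1 ≤ n) (a b ξ : ℝ)
    (hξ : ξ ∈ Set.Ioo a b) (f gm gp : ℝ → ℝ) (μm μp : Measure ℝ) (Q : Polynomial ℝ)
    (hgm_mono : MonotoneOn gm (Set.Ioo a b))
    (hgm_nonpos : ∀ x ∈ Set.Ioo a b, gm x ≤ 0)
    (hgm_rc : ∀ x ∈ Set.Ioo a b, ContinuousWithinAt gm (Set.Ici x) x)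
    (hgp_mono : MonotoneOn gp (Set.Ioo a b))
    (hgp_nonneg : ∀ x ∈ Set.Ioo a b, 0 ≤ gp x)
    (hgp_lc : ∀ x ∈ Set.Ioo a b, ContinuousWithinAt gp (Set.Iic x) x)
    (hgmξ : gm ξ = 0) (hgpξ : gp ξ = 0)
    (hμm : ∀ u v, a < u → u ≤ v → v ≤ ξ →
      μm (Set.Ioc u v) = ENNReal.ofReal (gm v - gm u))
    (hμp : ∀ u v, ξ ≤ u → u ≤ v → v < b →
      μp (Set.Ico u v) = ENNReal.ofReal (gp v - gp u))
    (hQ : Q.natDegree ≤ n - 1)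
    (hrep : ∀ x ∈ Set.Ioo a b, f x =
      (∫ u in Set.Ioc a ξ, (-1 : ℝ) ^ (n + 1) * max (u - x) 0 ^ n / (Nat.factorial n) ∂μm) +
      (∫ u in Set.Ico ξ b, max (x - u) 0 ^ n / (Nat.factorial n) ∂μp) +
      Q.eval x) :
    NConvexOn n a b f :=
  integral_representation_nconvex_general n hn a b ξ f gm gp μm μp Q hμm hμp hQ hrep
end

section
/- Let f, g : (a,b) → ℝ be n-convex functions. Then f ⪰ₙ g (i.e. f − g is n-convex) if and only if the Lebesgue–Stieltjes measures df_R^{(n)} and dg_R^{(n)} generated by the non-decreasing right-continuous functions f_R^{(n)} and g_R^{(n)} satisfy df_R^{(n)} ≥ dg_R^{(n)} as Borel measures on (a,b). -/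
open Set Filter MeasureTheory
open scoped Topology

/-!
On a compact interval `[u, v] ⊆ (a, b)`, monotonicity of `F n - G n` makes it (extended by
constants) a Stieltjes function `H`, and the interval formulas identify `μf` with `μg + dH` on
`(u, v]`; this gives `μg ≤ μf` there, and on all of `(a, b)` by exhausting it with such intervals.
Conversely `μg (x, y] ≤ μf (x, y]` is exactly `G n y - G n x ≤ F n y - F n x`. Right derivatives
are unique, so `F - G` is the only right-derivative chain of `f - g`, and `f - g` is `n`-convex
iff `F n - G n` is non-decreasing.
-/

namespace IsRightDerivChainOn

variable {F G : ℕ → ℝ → ℝ} {n : ℕ} {a b : ℝ}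

theorem sub (hF : IsRightDerivChainOn F n a b) (hG : IsRightDerivChainOn G n a b) :
    IsRightDerivChainOn (F - G) n a b :=
  fun k hk x hx => (hF k hk x hx).sub (hG k hk x hx)

theorem eqOn_of_eqOn_zero (hF : IsRightDerivChainOn F n a b) (hG : IsRightDerivChainOn G n a b)
    (h0 : EqOn (F 0) (G 0) (Ioo a b)) : ∀ k ≤ n, EqOn (F k) (G k) (Ioo a b) := by
  intro k
  induction k with
  | zero => exact fun _ => h0
  | succ k ih =>
    intro hk x hx
    have hkn : k < n := hk
    have hFG : F k =ᶠ[𝓝[Ici x] x] G k :=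
      (ih hkn.le).eventuallyEq_of_mem (mem_nhdsWithin_of_mem_nhds (isOpen_Ioo.mem_nhds hx))
    exact (uniqueDiffWithinAt_Ici x).eq_deriv _ (hF k hkn x hx)
      ((hG k hkn x hx).congr_of_eventuallyEq hFG (ih hkn.le hx))

theorem nconvexOn_iff (hF : IsRightDerivChainOn F n a b) :
    NConvexOn n a b (F 0) ↔ MonotoneOn (F n) (Ioo a b) :=
  ⟨fun ⟨H, hH0, hH, hmono⟩ =>
    hmono.congr (hH.eqOn_of_eqOn_zero hF (by rw [hH0]; exact eqOn_refl _ _) n le_rfl),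
   fun hmono => ⟨F, rfl, hF, hmono⟩⟩

end IsRightDerivChainOn

namespace StieltjesFunction

noncomputable def IccExtend {u v : ℝ} (huv : u ≤ v) (h : ℝ → ℝ) (hmono : MonotoneOn h (Icc u v))
    (hrc : ∀ x ∈ Icc u v, ContinuousWithinAt h (Ici x) x) : StieltjesFunction ℝ where
  toFun x := h (projIcc u v huv x)
  mono' _ _ hxy := hmono (projIcc u v huv _).2 (projIcc u v huv _).2 (monotone_projIcc huv hxy)
  right_continuous' x :=
    (hrc _ (projIcc u v huv x).2).comp (f := fun y => (projIcc u v huv y : ℝ))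
      (continuous_subtype_val.comp continuous_projIcc).continuousWithinAt
      fun _ hy => Subtype.coe_le_coe.2 (monotone_projIcc huv hy)

theorem IccExtend_measure_Ioc {u v : ℝ} (huv : u ≤ v) {h : ℝ → ℝ} (hmono : MonotoneOn h (Icc u v))
    (hrc : ∀ x ∈ Icc u v, ContinuousWithinAt h (Ici x) x) {s t : ℝ} (hs : s ∈ Icc u v)
    (ht : t ∈ Icc u v) :
    (IccExtend huv h hmono hrc).measure (Ioc s t) = ENNReal.ofReal (h t - h s) := by
  rw [measure_Ioc]
  show ENNReal.ofReal (h (projIcc u v huv t) - h (projIcc u v huv s)) = _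
  rw [projIcc_of_mem huv hs, projIcc_of_mem huv ht]

end StieltjesFunction

theorem MeasureTheory.Measure.restrict_Ioc_eq_of_measure_Ioc_eq {μ ν : Measure ℝ} {u v : ℝ}
    (hμ : μ (Ioc u v) ≠ ⊤)
    (h : ∀ s ∈ Icc u v, ∀ t ∈ Icc u v, s < t → μ (Ioc s t) = ν (Ioc s t)) :
    μ.restrict (Ioc u v) = ν.restrict (Ioc u v) := by
  refine Measure.ext_of_Ioc' _ _ (fun s t _ => ?_) (fun s t _ => ?_)
  · rw [Measure.restrict_apply measurableSet_Ioc]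
    exact ne_top_of_le_ne_top hμ (measure_mono inter_subset_right)
  · rw [Measure.restrict_apply measurableSet_Ioc, Measure.restrict_apply measurableSet_Ioc,
      Ioc_inter_Ioc]
    by_cases hlt : max s u < min t v
    · have hs : max s u ∈ Icc u v := ⟨le_max_right _ _, hlt.le.trans (min_le_right _ _)⟩
      have ht : min t v ∈ Icc u v := ⟨hs.1.trans hlt.le, min_le_right _ _⟩
      exact h _ hs _ ht hlt
    · simp [Ioc_eq_empty hlt]

theorem measure_le_of_monotoneOn_sub_Icc {μ ν : Measure ℝ} {f g : ℝ → ℝ} {u v : ℝ} (huv : u ≤ v)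
    (hg : MonotoneOn g (Icc u v)) (hfg : MonotoneOn (f - g) (Icc u v))
    (hrc : ∀ x ∈ Icc u v, ContinuousWithinAt (f - g) (Ici x) x)
    (hμ : ∀ s ∈ Icc u v, ∀ t ∈ Icc u v, s ≤ t → μ (Ioc s t) = ENNReal.ofReal (f t - f s))
    (hν : ∀ s ∈ Icc u v, ∀ t ∈ Icc u v, s ≤ t → ν (Ioc s t) = ENNReal.ofReal (g t - g s))
    {B : Set ℝ} (hB : B ⊆ Ioc u v) (hBm : MeasurableSet B) : ν B ≤ μ B := by
  set H := StieltjesFunction.IccExtend huv (f - g) hfg hrc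
  have hdecomp : μ.restrict (Ioc u v) = (ν + H.measure).restrict (Ioc u v) := by
    have hu : u ∈ Icc u v := left_mem_Icc.2 huv
    have hv : v ∈ Icc u v := right_mem_Icc.2 huv
    refine Measure.restrict_Ioc_eq_of_measure_Ioc_eq (by simp [hμ u hu v hv huv])
      fun s hs t ht hst => ?_
    rw [Measure.add_apply, hμ s hs t ht hst.le, hν s hs t ht hst.le,
      StieltjesFunction.IccExtend_measure_Ioc huv hfg hrc hs ht, ← ENNReal.ofReal_add
        (sub_nonneg.2 (hg hs ht hst.le)) (sub_nonneg.2 (hfg hs ht hst.le))]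
    congr 1
    simp only [Pi.sub_apply]
    ring
  calc ν B ≤ (ν + H.measure) B := le_self_add
    _ = (ν + H.measure).restrict (Ioc u v) B := by rw [Measure.restrict_apply hBm, inter_eq_left.2 hB]
    _ = μ B := by rw [← hdecomp, Measure.restrict_apply hBm, inter_eq_left.2 hB]

theorem measure_le_of_forall_subset_Ioc {μ ν : Measure ℝ} {a b : ℝ}
    (h : ∀ u ∈ Ioo a b, ∀ v ∈ Ioo a b, u ≤ v → ∀ B ⊆ Ioc u v, MeasurableSet B → ν B ≤ μ B)
    {B : Set ℝ} (hB : B ⊆ Ioo a b) (hBm : MeasurableSet B) : ν B ≤ μ B := by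
  rcases lt_or_ge a b with hab | hba
  swap
  · simp [subset_empty_iff.1 (Ioo_eq_empty hba.not_gt ▸ hB)]
  obtain ⟨c, hac, hcb⟩ := exists_between hab
  obtain ⟨u, hu_anti, hu_mem, hu_lim⟩ := exists_seq_strictAnti_tendsto' hac
  obtain ⟨v, hv_mono, hv_mem, hv_lim⟩ := exists_seq_strictMono_tendsto' hcb
  have huv k : u k ≤ v k := ((hu_mem k).2.trans (hv_mem k).1).le
  have hu_sub k : u k ∈ Ioo a b := ⟨(hu_mem k).1, (hu_mem k).2.trans hcb⟩
  have hv_sub k : v k ∈ Ioo a b := ⟨hac.trans (hv_mem k).1, (hv_mem k).2⟩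
  have hcover : B = ⋃ k, B ∩ Ioc (u k) (v k) := by
    refine (iUnion_subset fun _ => inter_subset_left).antisymm' fun x hx => ?_
    obtain ⟨k, hk⟩ := ((hu_lim.eventually (gt_mem_nhds (hB hx).1)).and
      (hv_lim.eventually (lt_mem_nhds (hB hx).2))).exists
    exact mem_iUnion.2 ⟨k, hx, hk.1, hk.2.le⟩
  have hmono : Monotone fun k => B ∩ Ioc (u k) (v k) := fun j k hjk =>
    inter_subset_inter_right _ (Ioc_subset_Ioc (hu_anti.antitone hjk) (hv_mono.monotone hjk))
  rw [hcover, hmono.measure_iUnion, hmono.measure_iUnion]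
  exact iSup_mono fun k => h _ (hu_sub k) _ (hv_sub k) (huv k) _ inter_subset_right
    (hBm.inter measurableSet_Ioc)

theorem monotoneOn_sub_iff_forall_measure_le {μ ν : Measure ℝ} {f g : ℝ → ℝ} {a b : ℝ}
    (hf : MonotoneOn f (Ioo a b)) (hg : MonotoneOn g (Ioo a b))
    (hrc : ∀ x ∈ Ioo a b, ContinuousWithinAt (f - g) (Ici x) x)
    (hμ : ∀ s ∈ Ioo a b, ∀ t ∈ Ioo a b, s ≤ t → μ (Ioc s t) = ENNReal.ofReal (f t - f s))
    (hν : ∀ s ∈ Ioo a b, ∀ t ∈ Ioo a b, s ≤ t → ν (Ioc s t) = ENNReal.ofReal (g t - g s)) :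
    MonotoneOn (f - g) (Ioo a b) ↔ ∀ B ⊆ Ioo a b, MeasurableSet B → ν B ≤ μ B := by
  constructor
  · intro hfg B hB hBm
    refine measure_le_of_forall_subset_Ioc (fun u hu v hv huv C hC hCm => ?_) hB hBm
    have hsub : Icc u v ⊆ Ioo a b := Icc_subset_Ioo hu.1 hv.2
    exact measure_le_of_monotoneOn_sub_Icc huv (hg.mono hsub) (hfg.mono hsub)
      (fun x hx => hrc x (hsub hx)) (fun s hs t ht => hμ s (hsub hs) t (hsub ht))
      (fun s hs t ht => hν s (hsub hs) t (hsub ht)) hC hCm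
  · intro hle x hx y hy hxy
    have hIoc := hle (Ioc x y) (fun t ht => ⟨hx.1.trans ht.1, ht.2.trans_lt hy.2⟩)
      measurableSet_Ioc
    rw [hμ x hx y hy hxy, hν x hx y hy hxy,
      ENNReal.ofReal_le_ofReal_iff (sub_nonneg.2 (hf hx hy hxy))] at hIoc
    simp only [Pi.sub_apply]
    linarith

theorem relative_nconvex_iff_measures_general (n : ℕ) (a b : ℝ)
    (f g : ℝ → ℝ) (F G : ℕ → ℝ → ℝ) (μf μg : Measure ℝ)
    (hF0 : F 0 = f) (hG0 : G 0 = g)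
    (hFchain : IsRightDerivChainOn F n a b) (hGchain : IsRightDerivChainOn G n a b)
    (hFmono : MonotoneOn (F n) (Set.Ioo a b)) (hGmono : MonotoneOn (G n) (Set.Ioo a b))
    (hFrc : ∀ x ∈ Set.Ioo a b, ContinuousWithinAt (F n) (Set.Ici x) x)
    (hGrc : ∀ x ∈ Set.Ioo a b, ContinuousWithinAt (G n) (Set.Ici x) x)
    (hμf : ∀ u ∈ Set.Ioo a b, ∀ v ∈ Set.Ioo a b, u ≤ v →
      μf (Set.Ioc u v) = ENNReal.ofReal (F n v - F n u))
    (hμg : ∀ u ∈ Set.Ioo a b, ∀ v ∈ Set.Ioo a b, u ≤ v →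
      μg (Set.Ioc u v) = ENNReal.ofReal (G n v - G n u)) :
    NConvexOn n a b (f - g) ↔
      ∀ B ⊆ Set.Ioo a b, MeasurableSet B → μg B ≤ μf B := by
  subst hF0 hG0
  rw [← Pi.sub_apply F G 0, (hFchain.sub hGchain).nconvexOn_iff]
  exact monotoneOn_sub_iff_forall_measure_le hFmono hGmono
    (fun x hx => (hFrc x hx).sub (hGrc x hx)) hμf hμg

/-- Let `f`, `g` be `n`-convex on `(a,b)` with right-derivative chains `F`, `G` whose
`n`-th terms are non-decreasing and right-continuous, and let `μf`, `μg` be the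
Lebesgue–Stieltjes measures they generate on `(a,b)`. Then `f - g` is `n`-convex
(i.e. `f ⪰ₙ g`) iff `μf ≥ μg` on Borel subsets of `(a,b)`. -/
theorem relative_nconvex_iff_measures (n : ℕ) (hn : 1 ≤ n) (a b : ℝ) (hab : a < b)
    (f g : ℝ → ℝ) (F G : ℕ → ℝ → ℝ) (μf μg : Measure ℝ)
    (hF0 : F 0 = f) (hG0 : G 0 = g)
    (hFchain : IsRightDerivChainOn F n a b) (hGchain : IsRightDerivChainOn G n a b)
    (hFmono : MonotoneOn (F n) (Set.Ioo a b)) (hGmono : MonotoneOn (G n) (Set.Ioo a b))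
    (hFrc : ∀ x ∈ Set.Ioo a b, ContinuousWithinAt (F n) (Set.Ici x) x)
    (hGrc : ∀ x ∈ Set.Ioo a b, ContinuousWithinAt (G n) (Set.Ici x) x)
    (hμf : ∀ u ∈ Set.Ioo a b, ∀ v ∈ Set.Ioo a b, u ≤ v →
      μf (Set.Ioc u v) = ENNReal.ofReal (F n v - F n u))
    (hμg : ∀ u ∈ Set.Ioo a b, ∀ v ∈ Set.Ioo a b, u ≤ v →
      μg (Set.Ioc u v) = ENNReal.ofReal (G n v - G n u)) :
    NConvexOn n a b (f - g) ↔
      ∀ B ⊆ Set.Ioo a b, MeasurableSet B → μg B ≤ μf B :=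
  relative_nconvex_iff_measures_general n a b f g F G μf μg hF0 hG0 hFchain hGchain hFmono hGmono
    hFrc hGrc hμf hμg
end

section
/- Let μ and ν be σ-finite Borel measures on ℝ with Lebesgue decompositions μ = μ_cont + μ_sing + μ_pp and ν = ν_cont + ν_sing + ν_pp into absolutely continuous (w.r.t. Lebesgue measure), singular continuous, and pure point (discrete) parts. Then μ ≥ ν if and only if μ_cont ≥ ν_cont, μ_sing ≥ ν_sing and μ_pp ≥ ν_pp. -/
open MeasureTheory

/-! Parts of different kinds are mutually singular: a countable set is Lebesgue-null and null for
every atomless measure. If `ν + ν' ≤ μ + μ'` and `ν ⟂ₘ μ'`, restricting both sides to a set that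
carries `ν` and is `μ'`-null gives `ν ≤ μ`. -/

namespace MeasureTheory.Measure

variable {α : Type*} [MeasurableSpace α]

theorem le_of_add_le_add_of_mutuallySingular {ν ν' μ μ' : Measure α} (h : ν + ν' ≤ μ + μ')
    (hν : ν ⟂ₘ μ') : ν ≤ μ := by
  set t := hν.nullSetᶜ
  calc ν = ν.restrict t := (restrict_eq_self_of_ae_mem (ae_iff.2 (by simp [t]))).symm
    _ ≤ (ν + ν').restrict t := restrict_mono subset_rfl (Measure.le_add_right le_rfl)
    _ ≤ (μ + μ').restrict t := restrict_mono subset_rfl h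
    _ = μ.restrict t := by rw [restrict_add, hν.restrict_compl_nullSet, add_zero]
    _ ≤ μ := restrict_le_self

theorem mutuallySingular_of_countable_support [MeasurableSingletonClass α] {ρ m : Measure α}
    (hρ : ∃ s : Set α, s.Countable ∧ ρ sᶜ = 0) (hm : ∀ x, m {x} = 0) : ρ ⟂ₘ m := by
  obtain ⟨s, hs, hρs⟩ := hρ
  have : NullSingletonClass m := ⟨hm⟩
  exact ⟨sᶜ, hs.measurableSet.compl, hρs, by rw [compl_compl]; exact hs.measure_zero m⟩

end MeasureTheory.Measure

open Measure in
theorem le_iff_parts_le_general (μ ν μc μs μp νc νs νp : Measure ℝ)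
    (hμ : μ = μc + μs + μp) (hν : ν = νc + νs + νp)
    (hμc : μc ≪ volume) (hνc : νc ≪ volume)
    (hμs : μs ⟂ₘ volume) (hνs : νs ⟂ₘ volume)
    (hμs_cont : ∀ x : ℝ, μs {x} = 0) (hνs_cont : ∀ x : ℝ, νs {x} = 0)
    (hμp : ∃ s : Set ℝ, s.Countable ∧ μp sᶜ = 0)
    (hνp : ∃ s : Set ℝ, s.Countable ∧ νp sᶜ = 0) :
    ν ≤ μ ↔ νc ≤ μc ∧ νs ≤ μs ∧ νp ≤ μp := by
  subst hμ hν
  refine ⟨fun h ↦ ⟨?_, ?_, ?_⟩, fun ⟨hc, hs, hp⟩ ↦ add_le_add (add_le_add hc hs) hp⟩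
  · refine le_of_add_le_add_of_mutuallySingular (ν' := νs + νp) (μ' := μs + μp)
      (by simpa only [add_assoc] using h) (.add_right ?_ ?_)
    · exact (hμs.mono_ac .rfl hνc).symm
    · exact ((mutuallySingular_of_countable_support hμp measure_singleton).mono_ac .rfl hνc).symm
  · refine le_of_add_le_add_of_mutuallySingular (ν' := νc + νp) (μ' := μc + μp)
      (by convert h using 1 <;> abel) (.add_right ?_ ?_)
    · exact hνs.mono_ac .rfl hμc
    · exact (mutuallySingular_of_countable_support hμp hνs_cont).symm
  · refine le_of_add_le_add_of_mutuallySingular (ν' := νc + νs) (μ' := μc + μs)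
      (by convert h using 1 <;> abel) (.add_right ?_ ?_)
    · exact (mutuallySingular_of_countable_support hνp measure_singleton).mono_ac .rfl hμc
    · exact mutuallySingular_of_countable_support hνp hμs_cont

/-- Let `μ`, `ν` be σ-finite Borel measures on `ℝ` with Lebesgue decompositions into
absolutely continuous (w.r.t. Lebesgue measure), singular continuous, and pure point
parts. Then `ν ≤ μ` iff each part of `ν` is dominated by the corresponding part of
`μ`. -/
theorem le_iff_parts_le (μ ν μc μs μp νc νs νp : Measure ℝ)
    [SigmaFinite μ] [SigmaFinite ν]
    (hμ : μ = μc + μs + μp) (hν : ν = νc + νs + νp)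
    (hμc : μc ≪ volume) (hνc : νc ≪ volume)
    (hμs : μs ⟂ₘ volume) (hνs : νs ⟂ₘ volume)
    (hμs_cont : ∀ x : ℝ, μs {x} = 0) (hνs_cont : ∀ x : ℝ, νs {x} = 0)
    (hμp : ∃ s : Set ℝ, s.Countable ∧ μp sᶜ = 0)
    (hνp : ∃ s : Set ℝ, s.Countable ∧ νp sᶜ = 0) :
    ν ≤ μ ↔ νc ≤ μc ∧ νs ≤ μs ∧ νp ≤ μp :=
  le_iff_parts_le_general μ ν μc μs μp νc νs νp hμ hν hμc hνc hμs hνs hμs_cont hνs_cont hμp hνp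
end
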